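/- Let m ≥ 1 be an integer, β ∈ ℝ, and let Q : (0,∞) → B(L²(ℝⁿ)) be a family of bounded linear operators such that (t Q_t)_{t>0} satisfies off-diagonal estimates of order M ≥ 1 with homogeneity m and constant C₀. Then there exists C > 0 (depending only on n, m, M, β, C₀) such that for every compactly supported continuous f : (0,∞) × ℝⁿ → ℂ, every x ∈ ℝⁿ and every integer j ≥ 1: ∫₀^∞ ∫_{B(x, t^{1/m})} | ∫_{t/2}^t Q_{t−s}(1_{C_j(x, 4s^{1/m})} f(s,·))(y) ds |² t^{β − n/m} dy dt ≤ C · 2^{−2jmM} ∫₀^∞ ‖1_{B(x, 2^{j+2} s^{1/m})} f(s,·)‖²_{L²(ℝⁿ)} s^{β − n/m} ds. -/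

import Mathlib

open MeasureTheory Metric Set
open scoped ENNReal NNReal

noncomputable section

attribute [local instance] Classical.propDecidable

abbrev Rn (n : ℕ) := EuclideanSpace ℝ (Fin n)
abbrev L2 (n : ℕ) : Type := Lp ℂ 2 (volume : Measure (Rn n))

/-- The element of `L²(ℝⁿ)` represented by a function (zero if not in `L²`). -/
def toL2 {n : ℕ} (g : Rn n → ℂ) : L2 n :=
  if h : MemLp g 2 (volume : Measure (Rn n)) then h.toLp g else 0

/-- Multiplication of an `L²` function by the indicator function `1_E`. -/
def indL2 {n : ℕ} (E : Set (Rn n)) (u : L2 n) : L2 n :=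
  if hE : MeasurableSet E then MemLp.toLp (E.indicator u) ((Lp.memLp u).indicator hE) else 0

/-- `f` is a compactly supported continuous function on `(0,∞) × ℝⁿ`. -/
def CcOnPos (n : ℕ) (f : ℝ → Rn n → ℂ) : Prop :=
  Continuous (Function.uncurry f) ∧ HasCompactSupport (Function.uncurry f) ∧
    tsupport (Function.uncurry f) ⊆ Ioi (0:ℝ) ×ˢ (univ : Set (Rn n))

/-- Distance between two sets in `ℝⁿ`. -/
def setDist {n : ℕ} (E F : Set (Rn n)) : ℝ := sInf (Set.image2 dist E F)

/-- The family `(T_t)_{t>0}` satisfies (Gaffney-Davies) off-diagonal estimates of order `M`,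
with homogeneity `m` and constant `C₀`. -/
def OffDiag (n : ℕ) (T : ℝ → (L2 n →L[ℂ] L2 n)) (M : ℝ) (m : ℕ) (C₀ : ℝ) : Prop :=
  ∀ E F : Set (Rn n), MeasurableSet E → MeasurableSet F → ∀ t : ℝ, 0 < t → ∀ u : L2 n,
    ‖indL2 E (T t (indL2 F u))‖ ≤ C₀ * (1 + setDist E F ^ (m:ℝ) / t) ^ (-M) * ‖indL2 F u‖

/-- The annuli `C_0(x,r) = B(x,r)`, `C_j(x,r) = B(x,2ʲr) \\ B(x,2^{j-1}r)` for `j ≥ 1`. -/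
def Cann {n : ℕ} (j : ℕ) (x : Rn n) (r : ℝ) : Set (Rn n) :=
  if j = 0 then ball x r else ball x (2^j * r) \ ball x (2^(j-1) * r)

/-! For `s ∈ (t/2, t)` the ball `B(x, t^{1/m})` and the annulus `C_j(x, 4 s^{1/m})` are at
distance at least `2^{j-1} t^{1/m}`. The off-diagonal estimate for `(t-s) Q_{t-s}`, with `M ≥ 1`
and `t - s ≤ t`, therefore bounds `1_B Q_{t-s} 1_{C_j}` by `C₀ 2^{mM} 2^{-jmM} t⁻¹`. Minkowski's
and the Cauchy–Schwarz inequality on `(t/2, t)` bound the inner integral at time `t` by a multiple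
of `2^{-2jmM} t⁻¹ ∫_{t/2}^t ‖1_{B(x, 2^{j+2} s^{1/m})} f(s)‖² ds`, and Tonelli (`s ∈ (t/2, t)` iff
`t ∈ (s, 2s)`) turns the weight `t^{β - n/m - 1}` into `s^{β - n/m}`. -/

theorem sq_lintegral_le_measure_univ_mul_lintegral_sq {α : Type*} [MeasurableSpace α]
    (μ : Measure α) (h : α → ℝ≥0∞) :
    (∫⁻ a, h a ∂μ) ^ 2 ≤ μ univ * ∫⁻ a, h a ^ 2 ∂μ := by
  obtain ⟨g, hg, hgh, hint⟩ := exists_measurable_le_lintegral_eq μ h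
  have hCS := ENNReal.lintegral_mul_le_Lp_mul_Lq μ Real.HolderConjugate.two_two hg.aemeasurable
    (aemeasurable_const (b := (1 : ℝ≥0∞)))
  simp only [Pi.mul_apply, mul_one, lintegral_const, one_pow, one_mul, ENNReal.rpow_two] at hCS
  have hsq : ∀ a b : ℝ≥0∞, (a ^ (1 / 2 : ℝ) * b ^ (1 / 2 : ℝ)) ^ 2 = b * a := fun a b => by
    rw [mul_pow, ← ENNReal.rpow_mul_natCast, ← ENNReal.rpow_mul_natCast]
    norm_num [mul_comm]
  calc (∫⁻ a, h a ∂μ) ^ 2 = (∫⁻ a, g a ∂μ) ^ 2 := by rw [hint]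
    _ ≤ μ univ * ∫⁻ a, g a ^ 2 ∂μ := (pow_le_pow_left₀ zero_le hCS 2).trans_eq (hsq _ _)
    _ ≤ μ univ * ∫⁻ a, h a ^ 2 ∂μ := by gcongr with a; exact hgh a

theorem lintegral_Ioi_lintegral_Ioo_half {g : ℝ → ℝ≥0∞} (hg : Measurable g) :
    ∫⁻ t in Ioi 0, ∫⁻ s in Ioo (t / 2) t, g s = ∫⁻ s in Ioi 0, ENNReal.ofReal s * g s := by
  have hswap : ∀ s t : ℝ,
      (Ioo (t / 2) t).indicator g s = (Ioo s (2 * s)).indicator (fun _ => g s) t := by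
    intro s t
    by_cases h : s ∈ Ioo (t / 2) t
    · have h' : t ∈ Ioo s (2 * s) := ⟨h.2, by linarith [h.1]⟩
      rw [indicator_of_mem h, indicator_of_mem h']
    · rw [indicator_of_notMem h, indicator_of_notMem]
      exact fun h' => h ⟨by linarith [h'.2], h'.1⟩
  have hmeas : Measurable (Function.uncurry fun t s => (Ioo (t / 2) t).indicator g s) := by
    have : MeasurableSet {p : ℝ × ℝ | p.2 ∈ Ioo (p.1 / 2) p.1} :=
      (measurableSet_lt (measurable_fst.div_const 2) measurable_snd).inter
        (measurableSet_lt measurable_snd measurable_fst)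
    exact (hg.comp measurable_snd).indicator this
  calc ∫⁻ t in Ioi 0, ∫⁻ s in Ioo (t / 2) t, g s
      = ∫⁻ t, ∫⁻ s, (Ioo (t / 2) t).indicator g s := by
        rw [setLIntegral_eq_of_support_subset]
        · simp_rw [lintegral_indicator measurableSet_Ioo]
        · intro t ht
          by_contra h
          rw [mem_Ioi, not_lt] at h
          exact ht (by simp only; rw [Ioo_eq_empty (by linarith)]; simp)
    _ = ∫⁻ s, ∫⁻ t, (Ioo s (2 * s)).indicator (fun _ => g s) t := by
        rw [lintegral_lintegral_swap hmeas.aemeasurable]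
        simp_rw [hswap]
    _ = ∫⁻ s in Ioi 0, ENNReal.ofReal s * g s := by
        simp_rw [lintegral_indicator_const measurableSet_Ioo, Real.volume_Ioo,
          show ∀ s : ℝ, 2 * s - s = s from fun s => by ring, mul_comm (g _)]
        refine (setLIntegral_eq_of_support_subset fun s hs => ?_).symm
        by_contra h
        rw [mem_Ioi, not_lt] at h
        exact hs (by simp [ENNReal.ofReal_eq_zero.2 h])

theorem measurable_setLIntegral_ball {α β : Type*} [MeasurableSpace α] [PseudoMetricSpace β]
    [MeasurableSpace β] [OpensMeasurableSpace β] {ν : Measure β} [SFinite ν]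
    {F : α × β → ℝ≥0∞} (hF : Measurable F) {r : α → ℝ} (hr : Measurable r) (x : β) :
    Measurable fun a => ∫⁻ y in ball x (r a), F (a, y) ∂ν := by
  have hS : MeasurableSet {p : α × β | dist p.2 x < r p.1} :=
    measurableSet_lt ((continuous_id.dist continuous_const).measurable.comp measurable_snd)
      (hr.comp measurable_fst)
  convert (hF.indicator hS).lintegral_prod_right' (ν := ν) using 2 with a
  rw [← lintegral_indicator measurableSet_ball]
  rfl

theorem rpow_sub_one_le_max_mul_of_mem_Ioo (γ : ℝ) {t s : ℝ} (hs : s ∈ Ioo (t / 2) t) :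
    t ^ (γ - 1) ≤ max 1 (2 ^ (γ - 1)) * s ^ (γ - 1) := by
  have hs0 : 0 < s := by linarith [hs.1, hs.2]
  rcases le_or_gt 1 γ with hγ | hγ
  · calc t ^ (γ - 1) ≤ (2 * s) ^ (γ - 1) :=
          Real.rpow_le_rpow (by linarith [hs.2]) (by linarith [hs.1]) (by linarith)
      _ = 2 ^ (γ - 1) * s ^ (γ - 1) := Real.mul_rpow zero_le_two hs0.le
      _ ≤ max 1 (2 ^ (γ - 1)) * s ^ (γ - 1) := by gcongr; exact le_max_right _ _
  · calc t ^ (γ - 1) ≤ s ^ (γ - 1) := Real.rpow_le_rpow_of_nonpos hs0 hs.2.le (by linarith)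
      _ ≤ max 1 (2 ^ (γ - 1)) * s ^ (γ - 1) :=
          le_mul_of_one_le_left (Real.rpow_nonneg hs0.le _) (le_max_left _ _)

theorem ofReal_rpow_mul_lintegral_Ioo_le (γ t : ℝ) (φ : ℝ → ℝ≥0∞) :
    ENNReal.ofReal (t ^ (γ - 1)) * ∫⁻ s in Ioo (t / 2) t, φ s
      ≤ ENNReal.ofReal (max 1 (2 ^ (γ - 1))) *
        ∫⁻ s in Ioo (t / 2) t, ENNReal.ofReal (s ^ (γ - 1)) * φ s := by
  rw [← lintegral_const_mul' _ _ ENNReal.ofReal_ne_top,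
    ← lintegral_const_mul' _ _ ENNReal.ofReal_ne_top]
  refine setLIntegral_mono' measurableSet_Ioo fun s hs => ?_
  rw [← mul_assoc, ← ENNReal.ofReal_mul (by positivity)]
  gcongr
  exact rpow_sub_one_le_max_mul_of_mem_Ioo γ hs

section IndicatorL2

variable {n : ℕ}

theorem indL2_coeFn {E : Set (Rn n)} (hE : MeasurableSet E) (u : L2 n) :
    indL2 E u =ᵐ[volume] E.indicator u := by
  rw [indL2, dif_pos hE]
  exact MemLp.coeFn_toLp _

theorem enorm_indL2 {E : Set (Rn n)} (hE : MeasurableSet E) (u : L2 n) :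
    ‖indL2 E u‖ₑ = eLpNorm u 2 (volume.restrict E) := by
  rw [Lp.enorm_def, eLpNorm_congr_ae (indL2_coeFn hE u),
    eLpNorm_indicator_eq_eLpNorm_restrict hE]

theorem enorm_indL2_sq {E : Set (Rn n)} (hE : MeasurableSet E) (u : L2 n) :
    ‖indL2 E u‖ₑ ^ 2 = ∫⁻ y in E, ‖u y‖ₑ ^ 2 := by
  have h := eLpNorm_nnreal_pow_eq_lintegral (f := (u : Rn n → ℂ)) (μ := volume.restrict E)
    (p := 2) two_ne_zero
  rw [enorm_indL2 hE]
  simpa only [NNReal.coe_ofNat, ENNReal.coe_ofNat, ENNReal.rpow_two] using h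

theorem enorm_indL2_toL2_sq {E : Set (Rn n)} (hE : MeasurableSet E) {g : Rn n → ℂ}
    (hg : MemLp g 2 volume) :
    ‖indL2 E (toL2 g)‖ₑ ^ 2 = ∫⁻ y in E, ‖g y‖ₑ ^ 2 := by
  rw [enorm_indL2_sq hE]
  refine lintegral_congr_ae (ae_restrict_of_ae ?_)
  rw [toL2, dif_pos hg]
  filter_upwards [hg.coeFn_toLp] with y hy
  rw [hy]

theorem indL2_empty (u : L2 n) : indL2 ∅ u = 0 := by
  rw [← enorm_eq_zero, enorm_indL2 MeasurableSet.empty, Measure.restrict_empty,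
    eLpNorm_measure_zero]

theorem norm_indL2_mono {E F : Set (Rn n)} (hE : MeasurableSet E) (hF : MeasurableSet F)
    (hEF : E ⊆ F) (u : L2 n) : ‖indL2 E u‖ ≤ ‖indL2 F u‖ := by
  rw [← enorm_le_iff_norm_le, enorm_indL2 hE, enorm_indL2 hF]
  exact eLpNorm_mono_measure _ (Measure.restrict_mono hEF le_rfl)

theorem norm_indL2_le (E : Set (Rn n)) (u : L2 n) : ‖indL2 E u‖ ≤ ‖u‖ := by
  by_cases hE : MeasurableSet E
  · rw [← enorm_le_iff_norm_le, enorm_indL2 hE, Lp.enorm_def]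
    exact eLpNorm_mono_measure _ Measure.restrict_le_self
  · simp [indL2, dif_neg hE]

def indL2CLM (E : Set (Rn n)) : L2 n →L[ℂ] L2 n :=
  LinearMap.mkContinuous
    { toFun := indL2 E
      map_add' := fun u v => by
        by_cases hE : MeasurableSet E
        · refine Lp.ext ?_
          filter_upwards [indL2_coeFn hE (u + v), Lp.coeFn_add (indL2 E u) (indL2 E v),
            indL2_coeFn hE u, indL2_coeFn hE v, Lp.coeFn_add u v] with y h h₁ h₂ h₃ h₄
          rw [h, h₁, Pi.add_apply, h₂, h₃]
          simp only [indicator_apply]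
          split_ifs
          · exact h₄
          · exact (add_zero 0).symm
        · simp [indL2, dif_neg hE]
      map_smul' := fun c u => by
        by_cases hE : MeasurableSet E
        · refine Lp.ext ?_
          filter_upwards [indL2_coeFn hE (c • u), Lp.coeFn_smul c (indL2 E u),
            indL2_coeFn hE u, Lp.coeFn_smul c u] with y h h₁ h₂ h₃
          rw [h, RingHom.id_apply, h₁, Pi.smul_apply, h₂]
          simp only [indicator_apply]
          split_ifs
          · exact h₃
          · exact (smul_zero c).symm
        · simp [indL2, dif_neg hE] }
    1 (fun u => by simpa using norm_indL2_le E u)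

@[simp] theorem indL2CLM_apply (E : Set (Rn n)) (u : L2 n) : indL2CLM E u = indL2 E u := rfl

theorem indL2_real_smul (E : Set (Rn n)) (c : ℝ) (u : L2 n) :
    indL2 E (c • u) = c • indL2 E u :=
  (indL2CLM E).map_smul_of_tower c u

theorem enorm_indL2_integral_le (E : Set (Rn n)) {ι : Type*} [MeasurableSpace ι]
    (ν : Measure ι) (g : ι → L2 n) :
    ‖indL2 E (∫ s, g s ∂ν)‖ₑ ≤ ∫⁻ s, ‖indL2 E (g s)‖ₑ ∂ν := by
  by_cases hg : Integrable g ν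
  · rw [← indL2CLM_apply, ← (indL2CLM E).integral_comp_comm hg]
    exact enorm_integral_le_lintegral_enorm _
  · rw [integral_undef hg, ← indL2CLM_apply, map_zero, enorm_zero]
    exact zero_le

end IndicatorL2

theorem CcOnPos.memLp {n : ℕ} {f : ℝ → Rn n → ℂ} (hf : CcOnPos n f) (s : ℝ) :
    MemLp (f s) 2 volume := by
  obtain ⟨hcont, hcpt, -⟩ := hf
  refine (hcont.comp (Continuous.prodMk_right s)).memLp_of_hasCompactSupport ?_
  refine HasCompactSupport.intro (hcpt.image continuous_snd) fun y hy => ?_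
  by_contra h
  exact hy ⟨(s, y), subset_tsupport _ h, rfl⟩

section Annuli

variable {n : ℕ}

theorem measurableSet_Cann (j : ℕ) (x : Rn n) (r : ℝ) : MeasurableSet (Cann j x r) := by
  unfold Cann
  split_ifs
  · exact measurableSet_ball
  · exact measurableSet_ball.diff measurableSet_ball

theorem Cann_subset_ball (j : ℕ) (x : Rn n) (r : ℝ) : Cann j x r ⊆ ball x (2 ^ j * r) := by
  unfold Cann
  split_ifs with hj
  · simp [hj]
  · exact sdiff_subset

theorem le_dist_of_mem_Cann {j : ℕ} (hj : j ≠ 0) {x q : Rn n} {r : ℝ} (hq : q ∈ Cann j x r) :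
    2 ^ (j - 1) * r ≤ dist q x := by
  rw [Cann, if_neg hj] at hq
  exact not_lt.1 fun h => hq.2 (mem_ball.2 h)

theorem rpow_inv_natCast_le_two_mul {m : ℕ} (hm : 1 ≤ m) {t s : ℝ} (ht : 0 ≤ t) (hts : t ≤ 2 * s) :
    t ^ (m:ℝ)⁻¹ ≤ 2 * s ^ (m:ℝ)⁻¹ := by
  have h2 : (2:ℝ) ^ (m:ℝ)⁻¹ ≤ 2 := by
    refine (Real.rpow_le_rpow_of_exponent_le one_le_two ?_).trans_eq (Real.rpow_one 2)
    exact inv_le_one_of_one_le₀ (by exact_mod_cast hm)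
  have hs : 0 ≤ s := by linarith
  calc t ^ (m:ℝ)⁻¹ ≤ (2 * s) ^ (m:ℝ)⁻¹ := Real.rpow_le_rpow ht hts (by positivity)
    _ = 2 ^ (m:ℝ)⁻¹ * s ^ (m:ℝ)⁻¹ := Real.mul_rpow zero_le_two hs
    _ ≤ 2 * s ^ (m:ℝ)⁻¹ := mul_le_mul_of_nonneg_right h2 (Real.rpow_nonneg hs _)

theorem le_dist_of_mem_ball_of_mem_Cann {m j : ℕ} (hm : 1 ≤ m) (hj : 1 ≤ j) {t s : ℝ}
    (ht : 0 < t) (hts : t ≤ 2 * s) {x p q : Rn n} (hp : p ∈ ball x (t ^ (m:ℝ)⁻¹))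
    (hq : q ∈ Cann j x (4 * s ^ (m:ℝ)⁻¹)) :
    2 ^ ((j:ℝ) - 1) * t ^ (m:ℝ)⁻¹ ≤ dist p q := by
  have hT := rpow_inv_natCast_le_two_mul hm ht.le hts
  have hq' := le_dist_of_mem_Cann (by omega) hq
  have hpow : (2:ℝ) ^ (j - 1) = 2 ^ ((j:ℝ) - 1) := by
    rw [← Real.rpow_natCast, Nat.cast_sub hj, Nat.cast_one]
  have h1 : (1:ℝ) ≤ 2 ^ (j - 1) := one_le_pow₀ one_le_two
  have h2 : 2 ^ (j - 1) * (2 * t ^ (m:ℝ)⁻¹) ≤ 2 ^ (j - 1) * (4 * s ^ (m:ℝ)⁻¹) :=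
    mul_le_mul_of_nonneg_left (by linarith) (by positivity)
  have h3 : t ^ (m:ℝ)⁻¹ ≤ 2 ^ (j - 1) * t ^ (m:ℝ)⁻¹ :=
    le_mul_of_one_le_left (by positivity) h1
  rw [← hpow]
  linarith [mem_ball.1 hp, dist_triangle q p x, dist_comm p q]

end Annuli

section OffDiagonal

variable {n m : ℕ} {M C₀ : ℝ}

theorem setDist_nonneg (E F : Set (Rn n)) : 0 ≤ setDist E F :=
  Real.sInf_nonneg (by rintro _ ⟨p, -, q, -, rfl⟩; exact dist_nonneg)

theorem OffDiag.mono_const {T : ℝ → (L2 n →L[ℂ] L2 n)} (hod : OffDiag n T M m C₀) {C₁ : ℝ}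
    (hC : C₀ ≤ C₁) : OffDiag n T M m C₁ := by
  intro E F hE hF t ht u
  refine (hod E F hE hF t ht u).trans ?_
  have := setDist_nonneg E F
  gcongr

theorem OffDiag.norm_le_of_le_dist {T : ℝ → (L2 n →L[ℂ] L2 n)} (hod : OffDiag n T M m C₀)
    (hC₀ : 0 ≤ C₀) (hM : 0 ≤ M) {E F : Set (Rn n)} (hE : MeasurableSet E) (hEne : E.Nonempty)
    (hF : MeasurableSet F) {D : ℝ} (hD : 0 < D) (hdist : ∀ p ∈ E, ∀ q ∈ F, D ≤ dist p q)
    {t : ℝ} (ht : 0 < t) (u : L2 n) :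
    ‖indL2 E (T t (indL2 F u))‖ ≤ C₀ * (D ^ (m:ℝ) / t) ^ (-M) * ‖indL2 F u‖ := by
  -- `setDist E ∅` is the junk value `sInf ∅ = 0`, so an empty `F` is handled separately.
  rcases F.eq_empty_or_nonempty with rfl | hFne
  · rw [indL2_empty, map_zero, ← indL2CLM_apply, map_zero]
    simp
  have hDF : D ≤ setDist E F :=
    le_csInf (hEne.image2 hFne) (by rintro _ ⟨p, hp, q, hq, rfl⟩; exact hdist p hp q hq)
  have hle : D ^ (m:ℝ) / t ≤ 1 + setDist E F ^ (m:ℝ) / t := by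
    have : D ^ (m:ℝ) / t ≤ setDist E F ^ (m:ℝ) / t := by gcongr
    linarith
  refine (hod E F hE hF t ht u).trans ?_
  gcongr C₀ * ?_ * _
  exact Real.rpow_le_rpow_of_nonpos (div_pos (Real.rpow_pos_of_pos hD _) ht) hle (neg_nonpos.2 hM)

theorem OffDiag.norm_indL2_le_of_smul {Q : ℝ → (L2 n →L[ℂ] L2 n)}
    (hod : OffDiag n (fun t => t • Q t) M m C₀) (hC₀ : 0 ≤ C₀) (hM : 1 ≤ M) {E F : Set (Rn n)}
    (hE : MeasurableSet E) (hEne : E.Nonempty) (hF : MeasurableSet F) {D : ℝ} (hD : 0 < D)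
    (hdist : ∀ p ∈ E, ∀ q ∈ F, D ≤ dist p q) {τ t : ℝ} (hτ : 0 < τ) (hτt : τ ≤ t)
    (u : L2 n) :
    ‖indL2 E (Q τ (indL2 F u))‖ ≤ C₀ * (D ^ (m:ℝ)) ^ (-M) * t ^ (M - 1) * ‖indL2 F u‖ := by
  have h := hod.norm_le_of_le_dist hC₀ (by linarith) hE hEne hF hD hdist hτ u
  rw [smul_apply, indL2_real_smul, norm_smul, Real.norm_of_nonneg hτ.le,
    Real.div_rpow (by positivity) hτ.le, Real.rpow_neg hτ.le, div_eq_mul_inv, inv_inv] at h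
  have hτM : τ ^ M * τ⁻¹ ≤ t ^ (M - 1) := by
    rw [← div_eq_mul_inv, ← Real.rpow_sub_one hτ.ne']
    exact Real.rpow_le_rpow hτ.le hτt (by linarith)
  calc ‖indL2 E (Q τ (indL2 F u))‖ = τ⁻¹ * (τ * ‖indL2 E (Q τ (indL2 F u))‖) := by
        field_simp
    _ ≤ τ⁻¹ * (C₀ * ((D ^ (m:ℝ)) ^ (-M) * τ ^ M) * ‖indL2 F u‖) := by gcongr
    _ = C₀ * (D ^ (m:ℝ)) ^ (-M) * (τ ^ M * τ⁻¹) * ‖indL2 F u‖ := by ring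
    _ ≤ C₀ * (D ^ (m:ℝ)) ^ (-M) * t ^ (M - 1) * ‖indL2 F u‖ := by gcongr

theorem OffDiag.norm_indL2_ball_Cann_le {Q : ℝ → (L2 n →L[ℂ] L2 n)}
    (hod : OffDiag n (fun t => t • Q t) M m C₀) (hC₀ : 0 ≤ C₀) (hm : 1 ≤ m) (hM : 1 ≤ M)
    (x : Rn n) {j : ℕ} (hj : 1 ≤ j) {t s : ℝ} (ht : 0 < t) (hs : s ∈ Ioo (t / 2) t)
    (u : L2 n) :
    ‖indL2 (ball x (t ^ (m:ℝ)⁻¹)) (Q (t - s) (indL2 (Cann j x (4 * s ^ (m:ℝ)⁻¹)) u))‖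
      ≤ C₀ * 2 ^ ((m:ℝ) * M) * 2 ^ (-((j:ℝ) * m * M)) * t⁻¹ *
        ‖indL2 (Cann j x (4 * s ^ (m:ℝ)⁻¹)) u‖ := by
  have hDm : (2 ^ ((j:ℝ) - 1) * t ^ (m:ℝ)⁻¹) ^ (m:ℝ) = 2 ^ (((j:ℝ) - 1) * m) * t := by
    rw [Real.mul_rpow (by positivity) (by positivity), ← Real.rpow_mul zero_le_two,
      ← Real.rpow_mul ht.le, inv_mul_cancel₀ (by positivity), Real.rpow_one]
  have hfactor : (2 ^ (((j:ℝ) - 1) * m) * t) ^ (-M) * t ^ (M - 1)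
      = 2 ^ ((m:ℝ) * M) * 2 ^ (-((j:ℝ) * m * M)) * t⁻¹ := by
    rw [Real.mul_rpow (by positivity) ht.le, ← Real.rpow_mul zero_le_two, mul_assoc,
      ← Real.rpow_add ht, ← Real.rpow_add two_pos, ← Real.rpow_neg_one t]
    ring_nf
  have h := hod.norm_indL2_le_of_smul (E := ball x (t ^ (m:ℝ)⁻¹))
    (F := Cann j x (4 * s ^ (m:ℝ)⁻¹)) (t := t) hC₀ hM measurableSet_ball
    (nonempty_ball.2 (by positivity)) (measurableSet_Cann _ _ _) (by positivity)
    (fun p hp q hq => le_dist_of_mem_ball_of_mem_Cann hm hj ht (by linarith [hs.1]) hp hq)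
    (sub_pos.2 hs.2) (by linarith [hs.1]) u
  rwa [hDm, mul_assoc C₀, hfactor, ← mul_assoc, ← mul_assoc] at h

theorem OffDiag.lintegral_ball_sq_integral_le {Q : ℝ → (L2 n →L[ℂ] L2 n)}
    (hod : OffDiag n (fun t => t • Q t) M m C₀) (hC₀ : 0 ≤ C₀) (hm : 1 ≤ m) (hM : 1 ≤ M)
    (x : Rn n) {j : ℕ} (hj : 1 ≤ j) {t : ℝ} (ht : 0 < t) (g : ℝ → L2 n) :
    ∫⁻ y in ball x (t ^ (m:ℝ)⁻¹),
        ‖(∫ s in Ioo (t / 2) t, Q (t - s) (indL2 (Cann j x (4 * s ^ (m:ℝ)⁻¹)) (g s))) y‖ₑ ^ 2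
      ≤ ENNReal.ofReal ((C₀ * 2 ^ ((m:ℝ) * M) * 2 ^ (-((j:ℝ) * m * M))) ^ 2 / 2 * t⁻¹) *
        ∫⁻ s in Ioo (t / 2) t, ‖indL2 (ball x (2 ^ ((j:ℝ) + 2) * s ^ (m:ℝ)⁻¹)) (g s)‖ₑ ^ 2 := by
  set K := C₀ * 2 ^ ((m:ℝ) * M) * 2 ^ (-((j:ℝ) * m * M))
  set h : ℝ → ℝ≥0∞ := fun s => ‖indL2 (ball x (2 ^ ((j:ℝ) + 2) * s ^ (m:ℝ)⁻¹)) (g s)‖ₑ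
  have hradius : ∀ s : ℝ, 2 ^ j * (4 * s ^ (m:ℝ)⁻¹) = 2 ^ ((j:ℝ) + 2) * s ^ (m:ℝ)⁻¹ := fun s => by
    rw [Real.rpow_add two_pos, Real.rpow_natCast]
    norm_num
    ring
  have hpoint : ∀ s ∈ Ioo (t / 2) t,
      ‖indL2 (ball x (t ^ (m:ℝ)⁻¹)) (Q (t - s) (indL2 (Cann j x (4 * s ^ (m:ℝ)⁻¹)) (g s)))‖ₑ
        ≤ ENNReal.ofReal (K * t⁻¹) * h s := by
    intro s hs
    have hsub := (Cann_subset_ball j x (4 * s ^ (m:ℝ)⁻¹)).trans_eq (congrArg _ (hradius s))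
    simp only [h, ← ofReal_norm]
    rw [← ENNReal.ofReal_mul (by positivity)]
    refine ENNReal.ofReal_le_ofReal ((hod.norm_indL2_ball_Cann_le hC₀ hm hM x hj ht hs _).trans ?_)
    gcongr
    exact norm_indL2_mono (measurableSet_Cann _ _ _) measurableSet_ball hsub _
  calc ∫⁻ y in ball x (t ^ (m:ℝ)⁻¹),
        ‖(∫ s in Ioo (t / 2) t, Q (t - s) (indL2 (Cann j x (4 * s ^ (m:ℝ)⁻¹)) (g s))) y‖ₑ ^ 2
      = ‖indL2 (ball x (t ^ (m:ℝ)⁻¹))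
          (∫ s in Ioo (t / 2) t, Q (t - s) (indL2 (Cann j x (4 * s ^ (m:ℝ)⁻¹)) (g s)))‖ₑ ^ 2 :=
        (enorm_indL2_sq measurableSet_ball _).symm
    _ ≤ (∫⁻ s in Ioo (t / 2) t, ENNReal.ofReal (K * t⁻¹) * h s) ^ 2 := by
        gcongr
        exact (enorm_indL2_integral_le _ _ _).trans (setLIntegral_mono' measurableSet_Ioo hpoint)
    _ ≤ ENNReal.ofReal (K * t⁻¹) ^ 2 *
          (ENNReal.ofReal (t / 2) * ∫⁻ s in Ioo (t / 2) t, h s ^ 2) := by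
        rw [lintegral_const_mul' _ _ ENNReal.ofReal_ne_top, mul_pow]
        gcongr
        refine (sq_lintegral_le_measure_univ_mul_lintegral_sq _ _).trans_eq ?_
        rw [Measure.restrict_apply_univ, Real.volume_Ioo, sub_half]
    _ = ENNReal.ofReal (K ^ 2 / 2 * t⁻¹) * ∫⁻ s in Ioo (t / 2) t, h s ^ 2 := by
        rw [← mul_assoc, ← ENNReal.ofReal_pow (by positivity), ← ENNReal.ofReal_mul (by positivity)]
        congr 2
        field_simp

theorem OffDiag.lintegral_ball_sq_integral_mul_rpow_le {Q : ℝ → (L2 n →L[ℂ] L2 n)}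
    (hod : OffDiag n (fun t => t • Q t) M m C₀) (hC₀ : 0 ≤ C₀) (hm : 1 ≤ m) (hM : 1 ≤ M)
    (x : Rn n) {j : ℕ} (hj : 1 ≤ j) (γ : ℝ) {t : ℝ} (ht : 0 < t) (g : ℝ → L2 n) :
    (∫⁻ y in ball x (t ^ (m:ℝ)⁻¹),
        ‖(∫ s in Ioo (t / 2) t, Q (t - s) (indL2 (Cann j x (4 * s ^ (m:ℝ)⁻¹)) (g s))) y‖ₑ ^ 2)
        * ENNReal.ofReal (t ^ γ)
      ≤ ENNReal.ofReal ((C₀ * 2 ^ ((m:ℝ) * M) * 2 ^ (-((j:ℝ) * m * M))) ^ 2 / 2 *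
          max 1 (2 ^ (γ - 1))) *
        ∫⁻ s in Ioo (t / 2) t, ENNReal.ofReal (s ^ (γ - 1)) *
          ‖indL2 (ball x (2 ^ ((j:ℝ) + 2) * s ^ (m:ℝ)⁻¹)) (g s)‖ₑ ^ 2 := by
  set A := (C₀ * 2 ^ ((m:ℝ) * M) * 2 ^ (-((j:ℝ) * m * M))) ^ 2 / 2
  have hA : 0 ≤ A := by positivity
  have hweight : ENNReal.ofReal (A * t⁻¹) * ENNReal.ofReal (t ^ γ)
      = ENNReal.ofReal A * ENNReal.ofReal (t ^ (γ - 1)) := by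
    rw [← ENNReal.ofReal_mul (by positivity), ← ENNReal.ofReal_mul hA, Real.rpow_sub_one ht.ne',
      div_eq_mul_inv]
    ring_nf
  calc _ ≤ ENNReal.ofReal (A * t⁻¹) *
          (∫⁻ s in Ioo (t / 2) t, ‖indL2 (ball x (2 ^ ((j:ℝ) + 2) * s ^ (m:ℝ)⁻¹)) (g s)‖ₑ ^ 2)
          * ENNReal.ofReal (t ^ γ) := by
        gcongr
        exact hod.lintegral_ball_sq_integral_le hC₀ hm hM x hj ht g
    _ = ENNReal.ofReal A * (ENNReal.ofReal (t ^ (γ - 1)) *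
          ∫⁻ s in Ioo (t / 2) t, ‖indL2 (ball x (2 ^ ((j:ℝ) + 2) * s ^ (m:ℝ)⁻¹)) (g s)‖ₑ ^ 2) := by
        rw [mul_right_comm, hweight, mul_assoc]
    _ ≤ _ := by
        rw [ENNReal.ofReal_mul hA, mul_assoc]
        gcongr ENNReal.ofReal A * ?_
        exact ofReal_rpow_mul_lintegral_Ioo_le γ t _

end OffDiagonal

theorem Jj_inner_estimate_general
    (n : ℕ) (m : ℕ) (hm : 1 ≤ m) (β : ℝ)
    (Q : ℝ → (L2 n →L[ℂ] L2 n)) (M C₀ : ℝ) (hM : 1 ≤ M)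
    (hod : OffDiag n (fun t => t • Q t) M m C₀) :
    ∃ C : ℝ, 0 < C ∧ ∀ f : ℝ → Rn n → ℂ, CcOnPos n f → ∀ x : Rn n, ∀ j : ℕ, 1 ≤ j →
      ∫⁻ t in Ioi (0:ℝ),
          (∫⁻ y in ball x (t ^ ((m:ℝ)⁻¹)),
            (‖(∫ s in Ioo (t/2) t,
                  Q (t - s) (indL2 (Cann j x (4 * s ^ ((m:ℝ)⁻¹))) (toL2 (f s)))) y‖₊ : ℝ≥0∞) ^ 2)
            * ENNReal.ofReal (t ^ (β - (n:ℝ)/(m:ℝ)))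
        ≤ ENNReal.ofReal (C * 2 ^ (-2 * (j:ℝ) * (m:ℝ) * M)) *
            ∫⁻ s in Ioi (0:ℝ),
              (‖indL2 (ball x ((2:ℝ) ^ ((j:ℝ) + 2) * s ^ ((m:ℝ)⁻¹)))
                  (toL2 (f s))‖₊ : ℝ≥0∞) ^ 2 * ENNReal.ofReal (s ^ (β - (n:ℝ)/(m:ℝ))) := by
  set γ := β - (n:ℝ) / (m:ℝ)
  set K := max C₀ 1 * 2 ^ ((m:ℝ) * M)
  refine ⟨K ^ 2 / 2 * max 1 (2 ^ (γ - 1)), by positivity, fun f hf x j hj => ?_⟩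
  set h : ℝ → ℝ≥0∞ :=
    fun s => ‖indL2 (ball x ((2:ℝ) ^ ((j:ℝ) + 2) * s ^ ((m:ℝ)⁻¹))) (toL2 (f s))‖ₑ
  have hmeas : Measurable fun s => ENNReal.ofReal (s ^ (γ - 1)) * h s ^ 2 := by
    refine (Measurable.ennreal_ofReal (by fun_prop)).mul ?_
    simp_rw [h, enorm_indL2_toL2_sq measurableSet_ball (hf.memLp _)]
    exact measurable_setLIntegral_ball (hf.1.measurable.enorm.pow_const 2) (by fun_prop) x
  have hconst : (K * 2 ^ (-((j:ℝ) * m * M))) ^ 2 / 2 * max 1 (2 ^ (γ - 1))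
      = K ^ 2 / 2 * max 1 (2 ^ (γ - 1)) * 2 ^ (-2 * (j:ℝ) * (m:ℝ) * M) := by
    rw [mul_pow, ← Real.rpow_natCast (2 ^ _), ← Real.rpow_mul zero_le_two]
    ring_nf
  calc _ ≤ ∫⁻ t in Ioi 0, ENNReal.ofReal ((K * 2 ^ (-((j:ℝ) * m * M))) ^ 2 / 2 *
          max 1 (2 ^ (γ - 1))) * ∫⁻ s in Ioo (t / 2) t, ENNReal.ofReal (s ^ (γ - 1)) * h s ^ 2 :=
        setLIntegral_mono' measurableSet_Ioi fun t ht =>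
          (hod.mono_const (le_max_left C₀ 1)).lintegral_ball_sq_integral_mul_rpow_le
            (by positivity) hm hM x hj γ ht _
    _ = ENNReal.ofReal (K ^ 2 / 2 * max 1 (2 ^ (γ - 1)) * 2 ^ (-2 * (j:ℝ) * (m:ℝ) * M)) *
          ∫⁻ s in Ioi 0, ENNReal.ofReal s * (ENNReal.ofReal (s ^ (γ - 1)) * h s ^ 2) := by
        rw [lintegral_const_mul' _ _ ENNReal.ofReal_ne_top, lintegral_Ioi_lintegral_Ioo_half hmeas,
          hconst]
    _ = _ := by
        congr 1
        refine setLIntegral_congr_fun measurableSet_Ioi fun s (hs : 0 < s) => ?_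
        rw [← mul_assoc, ← ENNReal.ofReal_mul hs.le, Real.rpow_sub_one hs.ne',
          mul_div_cancel₀ _ hs.ne', mul_comm]
        rfl

/-- Pointwise (in `x`) estimate for the pieces `J_j`, `j ≥ 1`, in the proof of tent space
maximal regularity. -/
theorem Jj_inner_estimate
    (n : ℕ) (hn : 1 ≤ n) (m : ℕ) (hm : 1 ≤ m) (β : ℝ)
    (Q : ℝ → (L2 n →L[ℂ] L2 n)) (M C₀ : ℝ) (hM : 1 ≤ M)
    (hod : OffDiag n (fun t => t • Q t) M m C₀) :
    ∃ C : ℝ, 0 < C ∧ ∀ f : ℝ → Rn n → ℂ, CcOnPos n f → ∀ x : Rn n, ∀ j : ℕ, 1 ≤ j →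
      ∫⁻ t in Ioi (0:ℝ),
          (∫⁻ y in ball x (t ^ ((m:ℝ)⁻¹)),
            (‖(∫ s in Ioo (t/2) t,
                  Q (t - s) (indL2 (Cann j x (4 * s ^ ((m:ℝ)⁻¹))) (toL2 (f s)))) y‖₊ : ℝ≥0∞) ^ 2)
            * ENNReal.ofReal (t ^ (β - (n:ℝ)/(m:ℝ)))
        ≤ ENNReal.ofReal (C * 2 ^ (-2 * (j:ℝ) * (m:ℝ) * M)) *
            ∫⁻ s in Ioi (0:ℝ),
              (‖indL2 (ball x ((2:ℝ) ^ ((j:ℝ) + 2) * s ^ ((m:ℝ)⁻¹)))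
                  (toL2 (f s))‖₊ : ℝ≥0∞) ^ 2 * ENNReal.ofReal (s ^ (β - (n:ℝ)/(m:ℝ))) :=
  Jj_inner_estimate_general n m hm β Q M C₀ hM hod
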